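/- arXiv:1704.02881 — 2 statements merged into one kernel-verified Lean document; each statement's English description precedes it below -/
import Mathlib

section
/- For any q, n ∈ ℕ, Σ_{d ∣ q} |c_d(n)| = 2^{ω(q/(n,q))} · (n,q), where (n,q) = gcd(n,q). -/
open Complex Finset

noncomputable section

/-- Number of distinct prime factors. -/
def omega (n : ℕ) : ℕ := n.primeFactors.card

/-- The unitary gcd `(k,q)_* = max {d : d ∣ k, d ∣∣ q}`. -/
def ugcd (k q : ℕ) : ℕ :=
  ((q.divisors).filter (fun d => d ∣ k ∧ Nat.Coprime d (q / d))).sup id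

/-- The set of unitary divisors of `q`. -/
def unitaryDivisors (q : ℕ) : Finset ℕ :=
  q.divisors.filter (fun d => Nat.Coprime d (q / d))

/-- The unitary Ramanujan sum `c*_q(n)`. -/
def cstar (q n : ℕ) : ℂ :=
  ∑ k ∈ Finset.Icc 1 q,
    if ugcd k q = 1 then Complex.exp (2 * Real.pi * Complex.I * k * n / q) else 0

/-- The classical Ramanujan sum `c_q(n)`. -/
def cc (q n : ℕ) : ℂ :=
  ∑ k ∈ Finset.Icc 1 q,
    if Nat.gcd k q = 1 then Complex.exp (2 * Real.pi * Complex.I * k * n / q) else 0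


/-!
Sieving the condition `(k, d) = 1` with the Möbius function and summing the resulting geometric
series over roots of unity gives Ramanujan's formula `c_d(n) = ∑_{e ∣ (d, n)} e μ(d / e)`, i.e.
`d ↦ c_d(n)` is the Dirichlet convolution of `μ` with the multiplicative function
`d ↦ [d ∣ n] d`. Hence `q ↦ ∑_{d ∣ q} |c_d(n)|` is multiplicative, as is the right-hand side, and it
suffices to compare them at `q = p ^ i`. If `p ^ v ∥ n`, then `c_{p^j}(n)` is `p ^ j - p ^ (j - 1)`
for `1 ≤ j ≤ v`, `-p ^ v` for `j = v + 1` and `0` beyond, so the sum of absolute values telescopes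
to `p ^ i` for `i ≤ v` and to `2 p ^ v` for `i > v`.
-/

open ArithmeticFunction
open scoped ArithmeticFunction.Moebius ArithmeticFunction.zeta

theorem Finset.sum_Icc_one_eq_sum_range {M : Type*} [AddCommGroup M] {f : ℕ → M} {m : ℕ}
    (hf : f m = f 0) : ∑ j ∈ Icc 1 m, f j = ∑ j ∈ range m, f j := by
  have h := sum_Ioc_add_eq_sum_Icc (f := f) (Nat.zero_le m)
  rw [← Nat.range_succ_eq_Icc_zero, sum_range_succ, hf, add_left_inj] at h
  exact h

theorem Nat.Icc_filter_dvd_eq_map {e : ℕ} (he : e ≠ 0) (d : ℕ) :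
    {k ∈ Icc 1 d | e ∣ k} = (Icc 1 (d / e)).map ⟨(e * ·), mul_right_injective₀ he⟩ := by
  ext k
  simp only [mem_filter, mem_Icc, mem_map, Function.Embedding.coeFn_mk,
    Nat.le_div_iff_mul_le (Nat.pos_of_ne_zero he)]
  constructor
  · rintro ⟨⟨hk, hkd⟩, j, rfl⟩
    exact ⟨j, ⟨Nat.pos_of_mul_pos_left hk, by linarith⟩, rfl⟩
  · rintro ⟨j, ⟨hj, hjd⟩, rfl⟩
    exact ⟨⟨Nat.mul_pos (Nat.pos_of_ne_zero he) hj, by linarith⟩, dvd_mul_right e j⟩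

theorem IsPrimitiveRoot.sum_Icc_pow_pow {R : Type*} [CommRing R] [IsDomain R] {z : R} {m : ℕ}
    (h : IsPrimitiveRoot z m) (n : ℕ) :
    ∑ j ∈ Icc 1 m, (z ^ n) ^ j = if m ∣ n then (m : R) else 0 := by
  split_ifs with hmn
  · simp [(h.pow_eq_one_iff_dvd n).2 hmn]
  · have hm : (z ^ n) ^ m = 1 := by rw [← pow_mul, mul_comm, pow_mul, h.pow_eq_one, one_pow]
    have hne : z ^ n - 1 ≠ 0 := sub_ne_zero.2 (mt (h.pow_eq_one_iff_dvd n).1 hmn)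
    rw [sum_Icc_one_eq_sum_range (by rw [hm, pow_zero])]
    refine (mul_eq_zero.1 ?_).resolve_right hne
    rw [geom_sum_mul, hm, sub_self]

theorem Complex.exp_two_pi_I_mul_div_eq_pow (k n d : ℕ) :
    exp (2 * Real.pi * I * k * n / d) = (exp (2 * Real.pi * I / d) ^ n) ^ k := by
  rw [← pow_mul, ← exp_nat_mul]
  push_cast
  ring_nf

namespace ArithmeticFunction

theorem sum_moebius_divisors (m : ℕ) : ∑ e ∈ m.divisors, (μ e : ℤ) = if m = 1 then 1 else 0 := by
  rw [← coe_mul_zeta_apply, moebius_mul_coe_zeta, one_apply]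

theorem sum_moebius_divisors_filter_dvd {d : ℕ} (hd : d ≠ 0) (k : ℕ) :
    ∑ e ∈ d.divisors with e ∣ k, (μ e : ℤ) = if Nat.gcd k d = 1 then 1 else 0 := by
  have h : {e ∈ d.divisors | e ∣ k} = (Nat.gcd k d).divisors := by
    ext e
    simp only [mem_filter, Nat.mem_divisors, Nat.dvd_gcd_iff, ne_eq, Nat.gcd_eq_zero_iff, hd,
      and_false, not_false_eq_true, and_true]
    tauto
  rw [h, sum_moebius_divisors]

theorem moebius_mul_apply_prime_pow_succ (f : ArithmeticFunction ℤ) {p : ℕ} (hp : p.Prime)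
    (i : ℕ) : (μ * f) (p ^ (i + 1)) = f (p ^ (i + 1)) - f (p ^ i) := by
  rw [mul_apply, Nat.sum_divisorsAntidiagonal (fun a b => μ a * f b),
    Nat.sum_divisors_prime_pow hp, sum_range_succ', sum_range_succ', sum_eq_zero fun j _ => by
      rw [moebius_apply_prime_pow hp (by omega), if_neg (by omega), zero_mul]]
  simp [pow_succ, hp.pos, moebius_apply_prime hp, sub_eq_neg_add]

variable {R : Type*} [Ring R] [LinearOrder R] [IsOrderedRing R]

def abs (f : ArithmeticFunction R) : ArithmeticFunction R := ⟨fun n => |f n|, by simp⟩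

@[simp]
theorem abs_apply (f : ArithmeticFunction R) (n : ℕ) : f.abs n = |f n| := rfl

theorem IsMultiplicative.abs {f : ArithmeticFunction R} (hf : f.IsMultiplicative) :
    f.abs.IsMultiplicative :=
  ⟨by simp [hf.map_one], fun hab => by simp [hf.map_mul_of_coprime hab, abs_mul]⟩

end ArithmeticFunction

theorem Nat.gcd_prime_pow {n p : ℕ} (hn : n ≠ 0) (hp : p.Prime) (i : ℕ) :
    Nat.gcd n (p ^ i) = p ^ min (n.factorization p) i := by
  obtain ⟨t, hti, hgcd⟩ := (Nat.dvd_prime_pow hp).1 (Nat.gcd_dvd_right n (p ^ i))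
  have htn : t ≤ n.factorization p :=
    (hp.pow_dvd_iff_le_factorization hn).1 (hgcd ▸ Nat.gcd_dvd_left n (p ^ i))
  refine hgcd.trans (congrArg (p ^ ·) (le_antisymm (le_min htn hti) ?_))
  rw [← Nat.pow_dvd_pow_iff_le_right hp.one_lt, ← hgcd]
  exact Nat.dvd_gcd ((hp.pow_dvd_iff_le_factorization hn).2 (min_le_left _ _))
    (pow_dvd_pow p (min_le_right _ _))

theorem omega_mul {a b : ℕ} (ha : a ≠ 0) (hb : b ≠ 0) (hab : a.Coprime b) :
    omega (a * b) = omega a + omega b := by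
  rw [omega, Nat.primeFactors_mul ha hb, card_union_of_disjoint hab.disjoint_primeFactors]
  rfl

def dvdId (n : ℕ) : ArithmeticFunction ℤ := ⟨fun d => if d ∣ n then d else 0, by simp⟩

theorem dvdId_apply (n d : ℕ) : dvdId n d = if d ∣ n then (d : ℤ) else 0 := rfl

theorem dvdId_apply_prime_pow {n p : ℕ} (hn : n ≠ 0) (hp : p.Prime) (j : ℕ) :
    dvdId n (p ^ j) = if j ≤ n.factorization p then (p : ℤ) ^ j else 0 := by
  simp [dvdId_apply, hp.pow_dvd_iff_le_factorization hn]

theorem isMultiplicative_dvdId (n : ℕ) : (dvdId n).IsMultiplicative := by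
  refine ⟨by simp [dvdId_apply], fun {a b} hab => ?_⟩
  have hdvd : a * b ∣ n ↔ a ∣ n ∧ b ∣ n :=
    ⟨fun h => ⟨dvd_of_mul_right_dvd h, dvd_of_mul_left_dvd h⟩,
      fun h => hab.mul_dvd_of_dvd_of_dvd h.1 h.2⟩
  simp only [dvdId_apply, hdvd, Nat.cast_mul]
  split_ifs <;> simp_all

def ramanujanSum (n : ℕ) : ArithmeticFunction ℤ := μ * dvdId n

theorem isMultiplicative_ramanujanSum (n : ℕ) : (ramanujanSum n).IsMultiplicative :=
  isMultiplicative_moebius.mul (isMultiplicative_dvdId n)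

theorem cc_eq_ramanujanSum {d : ℕ} (hd : d ≠ 0) (n : ℕ) : cc d n = ramanujanSum n d := by
  have hz := isPrimitiveRoot_exp d hd
  set z := exp (2 * Real.pi * I / d)
  calc cc d n = ∑ k ∈ Icc 1 d, ∑ e ∈ d.divisors with e ∣ k, (μ e : ℂ) * (z ^ n) ^ k := by
        refine sum_congr rfl fun k _ => ?_
        rw [exp_two_pi_I_mul_div_eq_pow, ← sum_mul, ← Int.cast_sum,
          sum_moebius_divisors_filter_dvd hd k]
        split_ifs <;> simp [z]
    _ = ∑ e ∈ d.divisors, (μ e : ℂ) * ∑ k ∈ Icc 1 d with e ∣ k, (z ^ n) ^ k := by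
        simp only [sum_filter, mul_sum, mul_ite, mul_zero]
        exact sum_comm
    _ = ∑ e ∈ d.divisors, (μ e : ℂ) * ∑ j ∈ Icc 1 (d / e), ((z ^ e) ^ n) ^ j := by
        refine sum_congr rfl fun e he => ?_
        rw [Nat.Icc_filter_dvd_eq_map (Nat.pos_of_mem_divisors he).ne', sum_map]
        simp only [Function.Embedding.coeFn_mk, ← pow_mul]
        ring_nf
    _ = ∑ e ∈ d.divisors, (μ e : ℂ) * if d / e ∣ n then ((d / e : ℕ) : ℂ) else 0 := by
        refine sum_congr rfl fun e he => ?_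
        have hde := (Nat.mul_div_cancel' (Nat.dvd_of_mem_divisors he)).symm
        rw [(hz.pow (Nat.pos_of_ne_zero hd) hde).sum_Icc_pow_pow]
    _ = ramanujanSum n d := by
        rw [ramanujanSum, mul_apply, Nat.sum_divisorsAntidiagonal (fun a b => μ a * dvdId n b),
          Int.cast_sum]
        refine sum_congr rfl fun e _ => ?_
        rw [dvdId_apply]
        split_ifs <;> simp only [Int.cast_mul, Int.cast_natCast, Int.cast_zero, mul_zero]

theorem sum_range_abs_ramanujanSum_prime_pow {n p : ℕ} (hn : n ≠ 0) (hp : p.Prime) (i : ℕ) :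
    ∑ j ∈ range (i + 1), |ramanujanSum n (p ^ j)|
      = if i ≤ n.factorization p then (p : ℤ) ^ i else 2 * p ^ n.factorization p := by
  induction i with
  | zero => simp [(isMultiplicative_ramanujanSum n).map_one]
  | succ i ih =>
    rw [sum_range_succ, ih, ramanujanSum, moebius_mul_apply_prime_pow_succ _ hp,
      dvdId_apply_prime_pow hn hp, dvdId_apply_prime_pow hn hp]
    have hpi : (p : ℤ) ^ i ≤ p ^ (i + 1) :=
      pow_le_pow_right₀ (by exact_mod_cast hp.one_le) i.le_succ
    rcases lt_trichotomy i (n.factorization p) with h | rfl | h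
    · simp [h.le, Nat.succ_le_of_lt h, abs_of_nonneg (sub_nonneg.2 hpi)]
    · simp [two_mul]
    · simp [h.not_ge, (Nat.lt_succ_of_lt h).not_ge]

def twoPowOmegaMulGcd (n : ℕ) : ArithmeticFunction ℤ :=
  ⟨fun q => if q = 0 then 0 else 2 ^ omega (q / Nat.gcd n q) * Nat.gcd n q, by simp⟩

theorem twoPowOmegaMulGcd_apply {n q : ℕ} (hq : q ≠ 0) :
    twoPowOmegaMulGcd n q = 2 ^ omega (q / Nat.gcd n q) * Nat.gcd n q :=
  if_neg hq

theorem twoPowOmegaMulGcd_apply_prime_pow {n p : ℕ} (hn : n ≠ 0) (hp : p.Prime) (i : ℕ) :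
    twoPowOmegaMulGcd n (p ^ i)
      = if i ≤ n.factorization p then (p : ℤ) ^ i else 2 * p ^ n.factorization p := by
  rw [twoPowOmegaMulGcd_apply (pow_ne_zero i hp.ne_zero), Nat.gcd_prime_pow hn hp]
  split_ifs with h
  · simp [min_eq_right h, omega, Nat.div_self (pow_pos hp.pos i)]
  · rw [min_eq_left (by omega), Nat.pow_div (by omega) hp.pos, omega,
      Nat.primeFactors_prime_pow (by omega) hp]
    simp

theorem isMultiplicative_twoPowOmegaMulGcd (n : ℕ) :
    (twoPowOmegaMulGcd n).IsMultiplicative := by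
  refine IsMultiplicative.iff_ne_zero.2
    ⟨by simp [twoPowOmegaMulGcd_apply, omega], fun {a b} ha hb hab => ?_⟩
  have hga := Nat.gcd_dvd_right n a
  have hgb := Nat.gcd_dvd_right n b
  have hcop : (a / Nat.gcd n a).Coprime (b / Nat.gcd n b) :=
    (hab.coprime_dvd_left (Nat.div_dvd_of_dvd hga)).coprime_dvd_right (Nat.div_dvd_of_dvd hgb)
  rw [twoPowOmegaMulGcd_apply (mul_ne_zero ha hb), twoPowOmegaMulGcd_apply ha,
    twoPowOmegaMulGcd_apply hb, hab.gcd_mul n, ← Nat.div_mul_div_comm hga hgb,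
    omega_mul ((Nat.div_ne_zero_iff_of_dvd hga).2 ⟨ha, Nat.gcd_ne_zero_right ha⟩)
      ((Nat.div_ne_zero_iff_of_dvd hgb).2 ⟨hb, Nat.gcd_ne_zero_right hb⟩) hcop]
  push_cast
  ring

theorem abs_ramanujanSum_mul_zeta {n : ℕ} (hn : n ≠ 0) :
    (ramanujanSum n).abs * ζ = twoPowOmegaMulGcd n := by
  have hmul := (isMultiplicative_ramanujanSum n).abs.mul isMultiplicative_zeta.natCast
  refine (hmul.eq_iff_eq_on_prime_powers _ _ (isMultiplicative_twoPowOmegaMulGcd n)).2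
    fun p i hp => ?_
  rw [coe_mul_zeta_apply, Nat.sum_divisors_prime_pow hp,
    twoPowOmegaMulGcd_apply_prime_pow hn hp, ← sum_range_abs_ramanujanSum_prime_pow hn hp]
  rfl

theorem stmt9 (q n : ℕ) (hq : 1 ≤ q) (hn : 1 ≤ n) :
    ∑ d ∈ q.divisors, ‖cc d n‖
      = 2 ^ omega (q / Nat.gcd n q) * (Nat.gcd n q : ℝ) := by
  have key := DFunLike.congr_fun (abs_ramanujanSum_mul_zeta (n := n) (by omega)) q
  rw [coe_mul_zeta_apply, twoPowOmegaMulGcd_apply (by omega)] at key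
  calc ∑ d ∈ q.divisors, ‖cc d n‖ = ∑ d ∈ q.divisors, ((|ramanujanSum n d| : ℤ) : ℝ) :=
        sum_congr rfl fun d hd => by
          rw [cc_eq_ramanujanSum (Nat.pos_of_mem_divisors hd).ne', norm_intCast, Int.cast_abs]
    _ = 2 ^ omega (q / Nat.gcd n q) * (Nat.gcd n q : ℝ) := by exact_mod_cast key
end
end

section
/- For every n ∈ ℕ, σ(n)/n = ζ(2) Σ_{q ≥ 1} φ₂(q) c*_q(n) / q⁴, with the series absolutely convergent, where φ₂(q) = q² Π_{p ∣ q} (1 − 1/p²) is the Jordan totient of order 2. -/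
open Complex Finset

noncomputable section

/-- The Jordan totient `φ_s(n) = n^s ∏_{p ∣ n} (1 - 1/p^s)` of real order `s`. -/
def jordan (s : ℝ) (n : ℕ) : ℝ :=
  (n : ℝ) ^ s * ∏ p ∈ n.primeFactors, (1 - 1 / (p : ℝ) ^ s)

/-!
Inclusion–exclusion over the prime powers `p ^ a ∥ q` gives
`c*_q(n) = ∏_{p ^ a ∥ q} (p ^ a [p ^ a ∣ n] - 1)`, so `c*_q(n)` is multiplicative in `q` and
bounded by `n`. The summand `φ₂(q) c*_q(n) / q⁴` is therefore multiplicative and `O(n / q²)`, and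
its series is an Euler product with factor `(1 - p⁻²) ∑_{a ≤ v_p(n)} p⁻ᵃ` at `p`. Multiplying by
the Euler product of `ζ(2)` cancels `1 - p⁻²` and leaves `∏_{p ∣ n} ∑_{a ≤ v_p(n)} p⁻ᵃ = σ(n) / n`.
-/

open ArithmeticFunction
open scoped ArithmeticFunction.sigma

namespace IsPrimitiveRoot

variable {R : Type*} [CommRing R] [IsDomain R] {ω : R} {m : ℕ}

theorem sum_Icc_pow_mul (hω : IsPrimitiveRoot ω m) (n : ℕ) :
    ∑ k ∈ Icc 1 m, ω ^ (k * n) = if m ∣ n then (m : R) else 0 := by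
  simp_rw [pow_mul']
  set z := ω ^ n
  have hzm : z ^ m = 1 := by rw [← pow_mul, mul_comm, pow_mul, hω.pow_eq_one, one_pow]
  have hshift : ∑ k ∈ Icc 1 m, z ^ k = ∑ k ∈ range m, z ^ k := by
    have h := (sum_range_succ' (z ^ ·) m).symm.trans (sum_range_succ (z ^ ·) m)
    rw [hzm, pow_zero, add_left_inj] at h
    rw [← h, range_eq_Ico, sum_Ico_add' (z ^ ·), zero_add, Ico_add_one_right_eq_Icc]
  rw [hshift]
  split_ifs with h
  · have hz : z = 1 := (hω.pow_eq_one_iff_dvd n).2 h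
    simp [hz]
  · have hz : z ≠ 1 := mt (hω.pow_eq_one_iff_dvd n).1 h
    have := geom_sum_mul z m
    rw [hzm, sub_self, mul_eq_zero] at this
    exact this.resolve_right (sub_ne_zero.2 hz)

theorem sum_Icc_ite_dvd_pow_mul (hω : IsPrimitiveRoot ω m) {d : ℕ} (hd : d ∣ m) (hm : m ≠ 0)
    (n : ℕ) : ∑ k ∈ Icc 1 m, (if d ∣ k then ω ^ (k * n) else 0)
      = if m / d ∣ n then ((m / d : ℕ) : R) else 0 := by
  have hd0 : 0 < d := Nat.pos_of_dvd_of_pos hd (Nat.pos_of_ne_zero hm)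
  have himage : (Icc 1 m).filter (d ∣ ·) = (Icc 1 (m / d)).image (d * ·) := by
    ext k
    simp only [mem_filter, mem_Icc, mem_image]
    constructor
    · rintro ⟨⟨hk1, hkm⟩, j, rfl⟩
      exact ⟨j, ⟨by lia, (Nat.le_div_iff_mul_le hd0).2 (by lia)⟩, rfl⟩
    · rintro ⟨j, ⟨hj1, hjm⟩, rfl⟩
      have := (Nat.le_div_iff_mul_le hd0).1 hjm
      exact ⟨⟨Nat.one_le_iff_ne_zero.2 (by positivity), by lia⟩, dvd_mul_right d j⟩
  rw [← sum_filter, himage, sum_image fun a _ b _ h => Nat.eq_of_mul_eq_mul_left hd0 h]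
  simp_rw [mul_assoc, pow_mul ω d]
  exact (hω.pow_of_dvd hd0.ne' hd).sum_Icc_pow_mul n

end IsPrimitiveRoot

namespace Nat

theorem prod_pow_dvd_iff {S : Finset ℕ} (hS : ∀ p ∈ S, p.Prime) (e : ℕ → ℕ) (k : ℕ) :
    ∏ p ∈ S, p ^ e p ∣ k ↔ ∀ p ∈ S, p ^ e p ∣ k := by
  refine ⟨fun h p hp => (dvd_prod_of_mem _ hp).trans h, fun h => ?_⟩
  have hcop : (S : Set ℕ).Pairwise fun p p' => IsCoprime ((p ^ e p : ℕ) : ℤ) (p' ^ e p' : ℕ) :=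
    fun p hp p' hp' hne => Nat.isCoprime_iff_coprime.2 <|
      Nat.Coprime.pow _ _ ((Nat.coprime_primes (hS p hp) (hS p' hp')).2 hne)
  exact_mod_cast Finset.prod_dvd_of_coprime hcop fun p hp => Int.natCast_dvd_natCast.2 (h p hp)

theorem ordProj_mul_of_not_dvd {a b p : ℕ} (ha : a ≠ 0) (hb : b ≠ 0) (hpb : ¬p ∣ b) :
    ordProj[p] (a * b) = ordProj[p] a := by
  rw [ordProj_mul p ha hb, factorization_eq_zero_of_not_dvd hpb, pow_zero, mul_one]

theorem ordProj_mul_dvd_of_coprime {p d e : ℕ} (hp : p.Prime) (hd : d ≠ 0) (he : e ≠ 0)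
    (hpd : p ∣ d) (hde : Coprime d e) : ordProj[p] (d * e) ∣ d := by
  have hpe : ¬p ∣ e := fun hpe => hp.one_lt.ne' <| Nat.eq_one_of_dvd_one (hde ▸ dvd_gcd hpd hpe)
  exact ordProj_mul_of_not_dvd hd he hpe ▸ ordProj_dvd d p

theorem prod_ordProj_mul_prod_sdiff {q : ℕ} (hq : q ≠ 0) {S : Finset ℕ} (hS : S ⊆ q.primeFactors) :
    (∏ p ∈ S, ordProj[p] q) * ∏ p ∈ q.primeFactors \ S, ordProj[p] q = q := by
  rw [mul_comm, prod_sdiff hS]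
  exact prod_factorization_pow_eq_self hq

end Nat

theorem ugcd_eq_one_iff {k q : ℕ} (hq : q ≠ 0) :
    ugcd k q = 1 ↔ ∀ p ∈ q.primeFactors, ¬ordProj[p] q ∣ k := by
  have hsup : ugcd k q = 1 ↔
      ∀ d ∈ q.divisors.filter (fun d => d ∣ k ∧ Nat.Coprime d (q / d)), d ≤ 1 := by
    have h1 : 1 ∈ q.divisors.filter (fun d => d ∣ k ∧ Nat.Coprime d (q / d)) := by
      simp [hq]
    rw [ugcd, ← Finset.sup_le_iff]
    exact ⟨le_of_eq, fun h => h.antisymm (le_sup (f := id) h1)⟩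
  simp only [hsup, mem_filter, Nat.mem_divisors]
  constructor
  · intro h p hp hpk
    have hp' := Nat.prime_of_mem_primeFactors hp
    have hv : q.factorization p ≠ 0 := by rwa [← Finsupp.mem_support_iff, Nat.support_factorization]
    have := h _ ⟨⟨Nat.ordProj_dvd q p, hq⟩, hpk, (Nat.coprime_ordCompl hp' hq).pow_left _⟩
    exact this.not_gt (Nat.one_lt_pow hv hp'.one_lt)
  · rintro h d ⟨⟨hdq, -⟩, hdk, hcop⟩
    by_contra hd1
    obtain ⟨p, hp, hpd⟩ := Nat.exists_prime_and_dvd (show d ≠ 1 by lia)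
    have hd0 : d ≠ 0 := ne_zero_of_dvd_ne_zero hq hdq
    have hqd : d * (q / d) = q := Nat.mul_div_cancel' hdq
    have hqd0 : q / d ≠ 0 := fun h0 => hq (by rw [← hqd, h0, mul_zero])
    have := Nat.ordProj_mul_dvd_of_coprime hp hd0 hqd0 hpd hcop
    rw [hqd] at this
    exact h p (Nat.mem_primeFactors.2 ⟨hp, hpd.trans hdq, hq⟩) (this.trans hdk)

theorem ite_ugcd_eq_one_eq_sum_powerset {R : Type*} [CommRing R] {k q : ℕ} (hq : q ≠ 0) :
    (if ugcd k q = 1 then (1 : R) else 0)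
      = ∑ S ∈ q.primeFactors.powerset,
          (-1) ^ S.card * if ∏ p ∈ S, ordProj[p] q ∣ k then 1 else 0 := by
  have hprod : (if ugcd k q = 1 then (1 : R) else 0)
      = ∏ p ∈ q.primeFactors, (1 + -if ordProj[p] q ∣ k then 1 else 0) := by
    simp only [ugcd_eq_one_iff hq, ← prod_boole]
    refine prod_congr rfl fun p _ => ?_
    split_ifs <;> simp
  rw [hprod, prod_one_add]
  refine sum_congr rfl fun S hS => ?_
  have hS : ∀ p ∈ S, p.Prime := fun p hp => Nat.prime_of_mem_primeFactors (mem_powerset.1 hS hp)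
  simp only [prod_neg, prod_boole, Nat.prod_pow_dvd_iff hS]

theorem cstar_eq_prod {q : ℕ} (hq : q ≠ 0) (n : ℕ) :
    cstar q n
      = ∏ p ∈ q.primeFactors, ((if ordProj[p] q ∣ n then ((ordProj[p] q : ℕ) : ℂ) else 0) - 1) := by
  set ζ := Complex.exp (2 * Real.pi * Complex.I / q)
  have hζ : IsPrimitiveRoot ζ q := Complex.isPrimitiveRoot_exp q hq
  have hexp : ∀ k : ℕ, Complex.exp (2 * Real.pi * Complex.I * k * n / q) = ζ ^ (k * n) := by
    intro k
    rw [← Complex.exp_nat_mul]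
    push_cast
    ring_nf
  calc cstar q n
      = ∑ k ∈ Icc 1 q, ∑ S ∈ q.primeFactors.powerset,
          (-1) ^ S.card * if ∏ p ∈ S, ordProj[p] q ∣ k then ζ ^ (k * n) else 0 := by
        refine sum_congr rfl fun k _ => ?_
        rw [hexp, ← boole_mul, ite_ugcd_eq_one_eq_sum_powerset hq, sum_mul]
        simp_rw [mul_assoc, boole_mul]
    _ = ∑ S ∈ q.primeFactors.powerset, (-1) ^ S.card *
          ∏ p ∈ q.primeFactors \ S, (if ordProj[p] q ∣ n then ((ordProj[p] q : ℕ) : ℂ) else 0) := by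
        rw [sum_comm]
        refine sum_congr rfl fun S hS => ?_
        have hSq := mem_powerset.1 hS
        have hsplit := Nat.prod_ordProj_mul_prod_sdiff hq hSq
        have hcompl : ∀ p ∈ q.primeFactors \ S, p.Prime :=
          fun p hp => Nat.prime_of_mem_primeFactors (mem_sdiff.1 hp).1
        rw [← mul_sum, hζ.sum_Icc_ite_dvd_pow_mul (Dvd.intro _ hsplit) hq n,
          Nat.div_eq_of_eq_mul_right (prod_pos fun p _ => Nat.ordProj_pos q p) hsplit.symm,
          prod_ite_zero]
        simp only [Nat.prod_pow_dvd_iff hcompl, Nat.cast_prod, Nat.cast_pow]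
    _ = _ := by
        simp_rw [sub_eq_neg_add, prod_add, prod_const]

theorem cstar_one (n : ℕ) : cstar 1 n = 1 := by
  simp [cstar_eq_prod one_ne_zero]

theorem cstar_mul {a b : ℕ} (hab : Nat.Coprime a b) (ha : a ≠ 0) (hb : b ≠ 0) (n : ℕ) :
    cstar (a * b) n = cstar a n * cstar b n := by
  have hdisj := hab.disjoint_primeFactors
  rw [cstar_eq_prod (mul_ne_zero ha hb), cstar_eq_prod ha, cstar_eq_prod hb,
    Nat.primeFactors_mul ha hb, prod_union hdisj]
  congr 1 <;> refine prod_congr rfl fun p hp => ?_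
  · have hpb : ¬p ∣ b := fun hpb => disjoint_left.1 hdisj hp <|
      Nat.mem_primeFactors.2 ⟨Nat.prime_of_mem_primeFactors hp, hpb, hb⟩
    rw [Nat.ordProj_mul_of_not_dvd ha hb hpb]
  · have hpa : ¬p ∣ a := fun hpa => disjoint_right.1 hdisj hp <|
      Nat.mem_primeFactors.2 ⟨Nat.prime_of_mem_primeFactors hp, hpa, ha⟩
    rw [mul_comm, Nat.ordProj_mul_of_not_dvd hb ha hpa]

theorem cstar_prime_pow {p e : ℕ} (hp : p.Prime) (he : e ≠ 0) (n : ℕ) :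
    cstar (p ^ e) n = (if p ^ e ∣ n then ((p ^ e : ℕ) : ℂ) else 0) - 1 := by
  rw [cstar_eq_prod (pow_ne_zero e hp.ne_zero), Nat.primeFactors_prime_pow he hp, prod_singleton,
    hp.factorization_pow, Finsupp.single_eq_same]

theorem norm_cstar_le {q n : ℕ} (hq : q ≠ 0) (hn : n ≠ 0) : ‖cstar q n‖ ≤ n := by
  have hlocal : ∀ p ∈ q.primeFactors,
      ‖(if ordProj[p] q ∣ n then ((ordProj[p] q : ℕ) : ℂ) else 0) - 1‖ ≤ (ordProj[p] n : ℕ) := by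
    intro p hp
    split_ifs with h
    · have hle : ordProj[p] q ≤ ordProj[p] n := Nat.le_of_dvd (Nat.ordProj_pos n p)
        (((Nat.prime_of_mem_primeFactors hp).pow_dvd_iff_dvd_ordProj hn).1 h)
      rw [← Nat.cast_one, ← Nat.cast_sub (Nat.ordProj_pos q p), Complex.norm_natCast]
      exact_mod_cast (Nat.sub_le _ 1).trans hle
    · rw [zero_sub, norm_neg, norm_one]
      exact_mod_cast Nat.ordProj_pos n p
  have hdvd : ∏ p ∈ q.primeFactors, ordProj[p] n ∣ n :=
    (Nat.prod_pow_dvd_iff (fun p => Nat.prime_of_mem_primeFactors) _ n).2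
      fun p _ => Nat.ordProj_dvd n p
  rw [cstar_eq_prod hq, norm_prod]
  calc _ ≤ ∏ p ∈ q.primeFactors, ((ordProj[p] n : ℕ) : ℝ) :=
        prod_le_prod (fun _ _ => norm_nonneg _) hlocal
    _ ≤ n := by exact_mod_cast Nat.le_of_dvd (Nat.pos_of_ne_zero hn) hdvd

theorem jordan_two (m : ℕ) :
    jordan 2 m = (m : ℝ) ^ 2 * ∏ p ∈ m.primeFactors, (1 - 1 / (p : ℝ) ^ 2) := by
  simp only [jordan, Real.rpow_two]

theorem jordan_two_mul {a b : ℕ} (hab : Nat.Coprime a b) (ha : a ≠ 0) (hb : b ≠ 0) :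
    jordan 2 (a * b) = jordan 2 a * jordan 2 b := by
  rw [jordan_two, jordan_two, jordan_two, Nat.primeFactors_mul ha hb,
    prod_union hab.disjoint_primeFactors]
  push_cast
  ring

theorem jordan_two_prime_pow {p e : ℕ} (hp : p.Prime) (he : e ≠ 0) :
    jordan 2 (p ^ e) = ((p : ℝ) ^ e) ^ 2 * (1 - 1 / (p : ℝ) ^ 2) := by
  rw [jordan_two, Nat.primeFactors_prime_pow he hp, prod_singleton, Nat.cast_pow]

theorem one_sub_one_div_sq_mem_Icc {p : ℕ} (hp : p ≠ 0) :
    0 ≤ 1 - 1 / (p : ℝ) ^ 2 ∧ 1 - 1 / (p : ℝ) ^ 2 ≤ 1 := by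
  have hp1 : (1 : ℝ) ≤ (p : ℝ) ^ 2 := one_le_pow₀ (Nat.one_le_cast.2 (Nat.pos_of_ne_zero hp))
  exact ⟨sub_nonneg.2 (div_le_one_of_le₀ hp1 (by positivity)), by simp⟩

theorem jordan_two_nonneg (m : ℕ) : 0 ≤ jordan 2 m := by
  rw [jordan_two]
  exact mul_nonneg (sq_nonneg _) <| prod_nonneg fun p hp =>
    (one_sub_one_div_sq_mem_Icc (Nat.prime_of_mem_primeFactors hp).ne_zero).1

theorem jordan_two_le_sq (m : ℕ) : jordan 2 m ≤ (m : ℝ) ^ 2 := by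
  rw [jordan_two]
  refine mul_le_of_le_one_right (sq_nonneg _) <| prod_le_one (fun p hp => ?_) fun p hp => ?_
  exacts [(one_sub_one_div_sq_mem_Icc (Nat.prime_of_mem_primeFactors hp).ne_zero).1,
    (one_sub_one_div_sq_mem_Icc (Nat.prime_of_mem_primeFactors hp).ne_zero).2]

theorem one_sub_inv_sq_ne_zero {p : ℕ} (hp : 1 < p) : (1 : ℂ) - (p : ℂ)⁻¹ ^ 2 ≠ 0 := by
  rw [sub_ne_zero, ne_comm, inv_pow, inv_ne_one, ← Nat.cast_pow, Nat.cast_ne_one]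
  exact (Nat.one_lt_pow two_ne_zero hp).ne'

def jordanCstarTerm (n q : ℕ) : ℂ := ((jordan 2 q : ℝ) : ℂ) * cstar q n / (q : ℂ) ^ 4

theorem jordanCstarTerm_zero (n : ℕ) : jordanCstarTerm n 0 = 0 := by
  simp [jordanCstarTerm]

theorem jordanCstarTerm_one (n : ℕ) : jordanCstarTerm n 1 = 1 := by
  simp [jordanCstarTerm, jordan_two, cstar_one]

theorem jordanCstarTerm_mul (n : ℕ) {a b : ℕ} (hab : Nat.Coprime a b) :
    jordanCstarTerm n (a * b) = jordanCstarTerm n a * jordanCstarTerm n b := by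
  rcases eq_or_ne a 0 with rfl | ha
  · simp [jordanCstarTerm_zero]
  rcases eq_or_ne b 0 with rfl | hb
  · simp [jordanCstarTerm_zero]
  simp only [jordanCstarTerm, cstar_mul hab ha hb, jordan_two_mul hab ha hb]
  push_cast
  ring

theorem norm_jordanCstarTerm_le {n : ℕ} (hn : n ≠ 0) (q : ℕ) :
    ‖jordanCstarTerm n q‖ ≤ n * (1 / (q : ℝ) ^ 2) := by
  rcases eq_or_ne q 0 with rfl | hq
  · simp [jordanCstarTerm_zero]
  have hq0 : (0 : ℝ) < q := by exact_mod_cast Nat.pos_of_ne_zero hq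
  rw [jordanCstarTerm, norm_div, norm_mul, Complex.norm_real,
    Real.norm_of_nonneg (jordan_two_nonneg q), norm_pow, Complex.norm_natCast]
  calc jordan 2 q * ‖cstar q n‖ / (q : ℝ) ^ 4 ≤ (q : ℝ) ^ 2 * n / (q : ℝ) ^ 4 := by
        gcongr
        exacts [jordan_two_le_sq q, norm_cstar_le hq hn]
    _ = n * (1 / (q : ℝ) ^ 2) := by field_simp

theorem summable_norm_jordanCstarTerm {n : ℕ} (hn : n ≠ 0) : Summable (‖jordanCstarTerm n ·‖) :=
  .of_nonneg_of_le (fun _ => norm_nonneg _) (norm_jordanCstarTerm_le hn)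
    ((Real.summable_one_div_nat_pow.2 one_lt_two).mul_left _)

-- Split so that the three summands have known sums: a finite sum, a geometric series and a
-- point mass at `e = 0`.
theorem jordanCstarTerm_prime_pow {n p e : ℕ} (hn : n ≠ 0) (hp : p.Prime) :
    jordanCstarTerm n (p ^ e)
      = (1 - (p : ℂ)⁻¹ ^ 2) * (if e ≤ n.factorization p then (p : ℂ)⁻¹ ^ e else 0)
        - (1 - (p : ℂ)⁻¹ ^ 2) * ((p : ℂ)⁻¹ ^ 2) ^ e + if e = 0 then 1 else 0 := by
  rcases eq_or_ne e 0 with rfl | he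
  · simp [jordanCstarTerm_one]
  have hp0 : (p : ℂ) ≠ 0 := Nat.cast_ne_zero.2 hp.ne_zero
  rw [jordanCstarTerm, jordan_two_prime_pow hp he, cstar_prime_pow hp he]
  simp only [hp.pow_dvd_iff_le_factorization hn, if_neg he]
  split_ifs <;> push_cast <;> simp only [inv_pow] <;> field_simp <;> ring

theorem hasSum_jordanCstarTerm_prime_pow {n p : ℕ} (hn : n ≠ 0) (hp : p.Prime) :
    HasSum (fun e => jordanCstarTerm n (p ^ e))
      ((1 - (p : ℂ)⁻¹ ^ 2) * ∑ a ∈ range (n.factorization p + 1), (p : ℂ)⁻¹ ^ a) := by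
  set x : ℂ := (p : ℂ)⁻¹ ^ 2
  have hx : ‖x‖ < 1 := by
    rw [norm_pow, norm_inv, Complex.norm_natCast]
    exact pow_lt_one₀ (by positivity) (inv_lt_one_of_one_lt₀ (by exact_mod_cast hp.one_lt))
      two_ne_zero
  have hfinite : HasSum (fun e => if e ≤ n.factorization p then (p : ℂ)⁻¹ ^ e else 0)
      (∑ a ∈ range (n.factorization p + 1), (p : ℂ)⁻¹ ^ a) := by
    have h : HasSum (fun e => if e ≤ n.factorization p then (p : ℂ)⁻¹ ^ e else 0)
        (∑ a ∈ range (n.factorization p + 1), if a ≤ n.factorization p then (p : ℂ)⁻¹ ^ a else 0) :=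
      hasSum_sum_of_ne_finset_zero fun e he => if_neg (by simpa [Nat.lt_succ_iff] using he)
    rwa [sum_ite_of_true fun e he => Nat.lt_succ_iff.1 (mem_range.1 he)] at h
  have := ((hfinite.mul_left (1 - x)).sub
    ((hasSum_geometric_of_norm_lt_one hx).mul_left (1 - x))).add (hasSum_ite_eq 0 (1 : ℂ))
  rw [mul_inv_cancel₀ (one_sub_inv_sq_ne_zero hp.one_lt), sub_add_cancel] at this
  exact this.congr_fun fun e => jordanCstarTerm_prime_pow hn hp

theorem hasProd_jordanCstarTerm {n : ℕ} (hn : n ≠ 0) :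
    HasProd (fun p : Nat.Primes => (1 - ((p : ℕ) : ℂ)⁻¹ ^ 2) *
        ∑ a ∈ range (n.factorization p + 1), ((p : ℕ) : ℂ)⁻¹ ^ a)
      (∑' q, jordanCstarTerm n q) := by
  have h := EulerProduct.eulerProduct_hasProd (jordanCstarTerm_one n)
    (jordanCstarTerm_mul n) (summable_norm_jordanCstarTerm hn)
    (jordanCstarTerm_zero n)
  simpa only [fun p : Nat.Primes => (hasSum_jordanCstarTerm_prime_pow hn p.prop).tsum_eq] using h

theorem sigma_one_div_eq_prod {n : ℕ} (hn : n ≠ 0) :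
    (σ 1 n : ℂ) / n = ∏ p ∈ n.primeFactors, ∑ a ∈ range (n.factorization p + 1), (p : ℂ)⁻¹ ^ a := by
  have hσ : σ 1 n = ∏ p ∈ n.primeFactors, σ 1 (ordProj[p] n) := by
    rw [isMultiplicative_sigma.multiplicative_factorization _ hn,
      Nat.prod_factorization_eq_prod_primeFactors]
  have hn' : (n : ℂ) = ∏ p ∈ n.primeFactors, ((ordProj[p] n : ℕ) : ℂ) := by
    rw [← Nat.cast_prod]
    exact congrArg _ (Nat.prod_factorization_pow_eq_self hn).symm
  rw [hσ, hn', Nat.cast_prod, ← prod_div_distrib]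
  refine prod_congr rfl fun p hp => ?_
  have hp0 : (p : ℂ) ≠ 0 := Nat.cast_ne_zero.2 (Nat.prime_of_mem_primeFactors hp).ne_zero
  rw [sigma_one_apply_prime_pow (Nat.prime_of_mem_primeFactors hp)]
  push_cast
  rw [div_eq_iff (pow_ne_zero _ hp0), sum_mul, ← sum_range_reflect]
  refine sum_congr rfl fun a ha => ?_
  rw [inv_pow, ← div_eq_inv_mul, eq_div_iff (pow_ne_zero _ hp0), ← pow_add]
  congr 1
  have := mem_range.1 ha
  lia

theorem riemannZeta_two_mul_tsum_jordanCstarTerm {n : ℕ} (hn : n ≠ 0) :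
    riemannZeta 2 * ∑' q, jordanCstarTerm n q = (σ 1 n : ℂ) / n := by
  set g : ℕ → ℂ := fun p => ∑ a ∈ range (n.factorization p + 1), (p : ℂ)⁻¹ ^ a
  have hζ := riemannZeta_eulerProduct_hasProd (s := 2) (by norm_num)
  have hfactor : ∀ p : Nat.Primes, (1 - ((p : ℕ) : ℂ) ^ (-2 : ℂ))⁻¹
      * ((1 - ((p : ℕ) : ℂ)⁻¹ ^ 2) * g p) = g p := by
    intro p
    rw [Complex.cpow_neg, show (2 : ℂ) = (2 : ℕ) from rfl, Complex.cpow_natCast, ← inv_pow,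
      inv_mul_cancel_left₀ (one_sub_inv_sq_ne_zero p.prop.one_lt)]
  have hprod := (hζ.mul (hasProd_jordanCstarTerm hn)).congr_fun fun p => (hfactor p).symm
  have hfinite :
      HasProd (fun p : Nat.Primes => g p) (∏ p ∈ n.primeFactors.subtype Nat.Prime, g p) :=
    hasProd_prod_of_ne_finset_one fun p hp => by
      have : n.factorization p = 0 := Finsupp.notMem_support_iff.1 fun h =>
        hp (mem_subtype.2 (by rwa [← Nat.support_factorization]))
      simp [g, this]
  rw [hprod.unique hfinite, prod_subtype_of_mem _ fun p hp => Nat.prime_of_mem_primeFactors hp,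
    sigma_one_div_eq_prod hn]

theorem stmt16 (n : ℕ) (hn : 1 ≤ n) :
    Summable (fun q : ℕ+ => ((jordan 2 q : ℝ) : ℂ) * cstar q n / ((q : ℕ) : ℂ) ^ 4) ∧
    ((ArithmeticFunction.sigma 1 n : ℕ) : ℂ) / (n : ℂ)
      = riemannZeta 2 * ∑' q : ℕ+, ((jordan 2 q : ℝ) : ℂ) * cstar q n / ((q : ℕ) : ℂ) ^ 4 := by
  have hn0 : n ≠ 0 := Nat.one_le_iff_ne_zero.1 hn
  refine ⟨summable_pnat_iff_summable_nat.2 (summable_norm_jordanCstarTerm hn0).of_norm, ?_⟩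
  change _ = riemannZeta 2 * ∑' q : ℕ+, jordanCstarTerm n q
  rw [tsum_pnat_eq_tsum_of_eq_zero (jordanCstarTerm_zero n),
    riemannZeta_two_mul_tsum_jordanCstarTerm hn0]
end
end
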